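/- For real numbers x, y, z with 0 < z ≤ y ≤ x, M(x,y,z) = y^(z−x) · z^(x−y) · x^(y−z) equals 1 if and only if x = y or y = z. -/

import Mathlib

/-!
Taking logarithms, `log M = (y - z) log x + (x - y) log z - (x - z) log y`. Since `y` lies between
`z` and `x`, strict concavity of `log` makes this strictly negative unless `y` is an endpoint.
-/

open Real Set

theorem StrictConcaveOn.mul_add_mul_lt_mul {𝕜 : Type*} [Field 𝕜] [LinearOrder 𝕜]
    [IsStrictOrderedRing 𝕜] {s : Set 𝕜} {f : 𝕜 → 𝕜} (hf : StrictConcaveOn 𝕜 s f) {a b c : 𝕜}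
    (ha : a ∈ s) (hc : c ∈ s) (hab : a < b) (hbc : b < c) :
    (c - b) * f a + (b - a) * f c < (c - a) * f b := by
  have hslope := hf.slope_anti_adjacent ha hc hab hbc
  rw [div_lt_div_iff₀ (sub_pos.2 hbc) (sub_pos.2 hab)] at hslope
  linarith

theorem log_rpow_mul_rpow_mul_rpow {x y z : ℝ} (hx : 0 < x) (hy : 0 < y) (hz : 0 < z) :
    log (y ^ (z - x) * z ^ (x - y) * x ^ (y - z)) =
      (y - z) * log x + (x - y) * log z - (x - z) * log y := by
  rw [log_mul (by positivity) (by positivity), log_mul (by positivity) (by positivity),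
    log_rpow hy, log_rpow hz, log_rpow hx]
  ring

theorem M_eq_one_iff (x y z : ℝ) (hz : 0 < z) (hzy : z ≤ y) (hyx : y ≤ x) :
    y ^ (z - x) * z ^ (x - y) * x ^ (y - z) = 1 ↔ x = y ∨ y = z := by
  have hy : 0 < y := hz.trans_le hzy
  have hx : 0 < x := hy.trans_le hyx
  have hM : 0 < y ^ (z - x) * z ^ (x - y) * x ^ (y - z) := by positivity
  have hlog_iff : y ^ (z - x) * z ^ (x - y) * x ^ (y - z) = 1 ↔
      log (y ^ (z - x) * z ^ (x - y) * x ^ (y - z)) = 0 :=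
    ⟨fun h ↦ h ▸ log_one, eq_one_of_pos_of_log_eq_zero hM⟩
  rw [hlog_iff, log_rpow_mul_rpow_mul_rpow hx hy hz]
  constructor
  · intro hlog
    by_contra! hne
    have hconc := strictConcaveOn_log_Ioi.mul_add_mul_lt_mul (mem_Ioi.2 hz) (mem_Ioi.2 hx)
      (hzy.lt_of_ne hne.2.symm) (hyx.lt_of_ne hne.1.symm)
    linarith
  · rintro (rfl | rfl) <;> ring
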